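/- With the zero-subspace transformation and (A,B,C) of relative degree ρ, there exists ε ∈ {1, −1}, independent of s, such that for every s ∈ 𝕜: C * adjugate(s·I_n − A) * B = ε · (C * A^(ρ−1) * B) · det(s·I_{l_z} − A_η) (equality of scalars, identifying the 1×1 matrices with their unique entries). -/

import Mathlib

/-!
Conjugate by `T`. The last `ρ` rows of `T` are `C, CA, …, CA^(ρ-1)`, so `C T⁻¹` is the unit row
at the first of these coordinates, and the relative-degree conditions together with `B_z B = 0`
give `T B = (C A^(ρ-1) B) e_n`. Hence the left-hand side is `C A^(ρ-1) B` times a single cofactor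
of `s - T A T⁻¹`. Among the last `ρ` rows of `T A T⁻¹`, all but the final one are the next unit
row, so the matrix of that cofactor is block upper triangular, with diagonal blocks `s - A_η` and
a `ρ × ρ` block of determinant `1`. In particular `ε = 1`.
-/

open Matrix

namespace Matrix

variable {R : Type*} [CommRing R]

theorem adjugate_conj {ι : Type*} [Fintype ι] [DecidableEq ι] {T : Matrix ι ι R}
    (hT : IsUnit T.det) (M : Matrix ι ι R) :
    adjugate (T * M * T⁻¹) = T * adjugate M * T⁻¹ := by
  have adjugate_eq : ∀ P : Matrix ι ι R, IsUnit P.det → adjugate P = P.det • P⁻¹ :=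
    fun P hP => by rw [inv_def, smul_smul, Ring.mul_inverse_cancel _ hP, one_smul]
  rw [adjugate_mul_distrib, adjugate_mul_distrib, adjugate_eq T hT,
    adjugate_eq T⁻¹ (isUnit_nonsing_inv_det T hT), nonsing_inv_nonsing_inv T hT]
  simp only [Matrix.smul_mul, Matrix.mul_smul, smul_smul, Matrix.mul_assoc]
  rw [mul_comm T.det, det_nonsing_inv_mul_det T hT, one_smul]

theorem mul_nonsing_inv_apply_eq_single_of_apply_eq {κ ι : Type*} [Fintype ι] [DecidableEq ι]
    {T : Matrix ι ι R} (hT : IsUnit T.det) {M : Matrix κ ι R} {i : κ} {j : ι}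
    (h : M i = T j) : (M * T⁻¹) i = Pi.single j 1 := by
  funext k
  rw [mul_apply_eq_vecMul, h, ← mul_apply_eq_vecMul, mul_nonsing_inv T hT, one_eq_pi_single]

theorem mul_nonsing_inv_eq_single_of_row_eq {ι : Type*} [Fintype ι] [DecidableEq ι]
    {T : Matrix ι ι R} (hT : IsUnit T.det) {C : Matrix (Fin 1) ι R} {i : ι} (h : C 0 = T i) :
    C * T⁻¹ = single 0 i 1 := by
  ext a j
  rw [Subsingleton.elim a 0, mul_nonsing_inv_apply_eq_single_of_apply_eq hT h]
  simp [single_apply, Pi.single_apply, eq_comm]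

theorem det_updateRow_last_smul_one_sub_of_shift {r : ℕ} (s : R)
    (Y : Matrix (Fin (r + 1)) (Fin (r + 1)) R)
    (hY : ∀ k : Fin r, Y k.castSucc = Pi.single k.succ 1) :
    ((s • 1 - Y).updateRow (Fin.last r) (Pi.single 0 1)).det = 1 := by
  -- Expanding along the last row leaves the minor without column `0`, which is lower triangular
  -- with diagonal entries `-1`.
  rw [det_succ_row _ (Fin.last r), Finset.sum_eq_single 0 (fun j _ hj => by simp [hj]) (by simp),
    Fin.succAbove_last, Fin.succAbove_zero, det_of_isLowerTriangular]
  · simp [hY, Fin.castSucc_ne_last, one_apply_ne Fin.castSucc_lt_succ.ne, ← pow_add]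
  · intro k j (hkj : k < j)
    have hkj' : k.castSucc ≠ j.succ := by simp [Fin.ext_iff]; omega
    simp [Fin.castSucc_ne_last, hY, one_apply_ne hkj', hkj.ne]

theorem det_updateRow_smul_one_sub_eq_det_toBlocks₁₁ {α : Type*} [Fintype α] [DecidableEq α]
    {r : ℕ} (s : R) (X : Matrix (α ⊕ Fin (r + 1)) (α ⊕ Fin (r + 1)) R)
    (hX : ∀ k : Fin r, X (.inr k.castSucc) = Pi.single (.inr k.succ) 1) :
    ((s • 1 - X).updateRow (.inr (Fin.last r)) (Pi.single (.inr 0) 1)).det =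
      (s • 1 - X.toBlocks₁₁).det := by
  set M := (s • 1 - X).updateRow (.inr (Fin.last r)) (Pi.single (.inr 0) 1)
  have h₂₁ : M.toBlocks₂₁ = 0 := by
    ext k i
    induction k using Fin.lastCases with
    | last => simp [M, toBlocks₂₁]
    | cast k => simp [M, toBlocks₂₁, Fin.castSucc_ne_last, hX]
  have h₁₁ : M.toBlocks₁₁ = s • 1 - X.toBlocks₁₁ := by
    ext i j
    simp [M, toBlocks₁₁, one_apply]
  have h₂₂ : M.toBlocks₂₂ = (s • 1 - X.toBlocks₂₂).updateRow (Fin.last r) (Pi.single 0 1) := by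
    ext k j
    induction k using Fin.lastCases with
    | last => simp [M, toBlocks₂₂, Pi.single_apply]
    | cast k => simp [M, toBlocks₂₂, Fin.castSucc_ne_last, one_apply]
  have hX₂₂ : ∀ k : Fin r, X.toBlocks₂₂ k.castSucc = Pi.single k.succ 1 := fun k => by
    funext j
    simp [toBlocks₂₂, hX, Pi.single_apply]
  rw [← fromBlocks_toBlocks M, h₂₁, det_fromBlocks_zero₂₁, h₁₁, h₂₂,
    det_updateRow_last_smul_one_sub_of_shift s _ hX₂₂, mul_one]

section ZeroDynamics

variable {ι α : Type*} [Fintype ι] [DecidableEq ι] {r : ℕ}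
  {e : α ⊕ Fin (r + 1) ≃ ι} {A T : Matrix ι ι R} {B : Matrix ι (Fin 1) R}
  {C : Matrix (Fin 1) ι R} {Bz : Matrix α ι R}

theorem mul_eq_single_of_relativeDegree (hrd : ∀ k < r, C * A ^ k * B = 0) (hBz : Bz * B = 0)
    (hTz : ∀ i, T (e (.inl i)) = Bz i)
    (hTc : ∀ k : Fin (r + 1), T (e (.inr k)) = (C * A ^ (k : ℕ)) 0) :
    T * B = single (e (.inr (Fin.last r))) 0 ((C * A ^ r * B) 0 0) := by
  ext i j
  obtain ⟨x, rfl⟩ := e.surjective i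
  rw [Subsingleton.elim j 0, mul_apply_eq_vecMul]
  rcases x with i | k
  · rw [hTz, ← mul_apply_eq_vecMul, hBz]
    simp
  · rw [hTc, ← mul_apply_eq_vecMul]
    induction k using Fin.lastCases with
    | last => simp
    | cast k => simp [hrd k k.isLt, (Fin.castSucc_ne_last k).symm]

theorem conj_submatrix_inr_castSucc [DecidableEq α] (hT : IsUnit T.det)
    (hTc : ∀ k : Fin (r + 1), T (e (.inr k)) = (C * A ^ (k : ℕ)) 0) (k : Fin r) :
    (T * A * T⁻¹).submatrix e e (.inr k.castSucc) = Pi.single (.inr k.succ) 1 := by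
  have hrow : (T * A) (e (.inr k.castSucc)) = T (e (.inr k.succ)) := by
    rw [mul_apply_eq_vecMul, hTc, hTc, ← mul_apply_eq_vecMul, Fin.val_succ, pow_succ,
      Matrix.mul_assoc, Fin.val_castSucc]
  funext x
  simp only [submatrix_apply, mul_nonsing_inv_apply_eq_single_of_apply_eq hT hrow]
  simp [Pi.single_apply]

theorem conj_submatrix_toBlocks₁₁ (hTz : ∀ i, T (e (.inl i)) = Bz i) :
    ((T * A * T⁻¹).submatrix e e).toBlocks₁₁ = Bz * A * T⁻¹.submatrix id (e ∘ .inl) := by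
  ext i j
  simp [toBlocks₁₁, mul_apply, hTz]

theorem mul_adjugate_mul_eq_mul_det_zeroDynamics [Fintype α] [DecidableEq α]
    (hrd : ∀ k < r, C * A ^ k * B = 0)
    (hBz : Bz * B = 0) (hTz : ∀ i, T (e (.inl i)) = Bz i)
    (hTc : ∀ k : Fin (r + 1), T (e (.inr k)) = (C * A ^ (k : ℕ)) 0) (hT : IsUnit T.det)
    (s : R) :
    (C * (s • 1 - A).adjugate * B) 0 0 =
      (C * A ^ r * B) 0 0 * (s • 1 - Bz * A * T⁻¹.submatrix id (e ∘ .inl)).det := by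
  set X := (T * A * T⁻¹).submatrix e e
  have hconj : s • 1 - T * A * T⁻¹ = T * (s • 1 - A) * T⁻¹ := by
    rw [Matrix.mul_sub, Matrix.sub_mul, Matrix.mul_smul, Matrix.mul_one, Matrix.smul_mul,
      mul_nonsing_inv T hT]
  have hsub : s • 1 - X = (s • 1 - T * A * T⁻¹).submatrix e e := by
    ext i j
    simp [X, one_apply]
  calc (C * (s • 1 - A).adjugate * B) 0 0
      = (C * T⁻¹ * (s • 1 - T * A * T⁻¹).adjugate * (T * B)) 0 0 := by
        rw [hconj, adjugate_conj hT]
        simp only [Matrix.mul_assoc, nonsing_inv_mul_cancel_left _ _ hT]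
    _ = (s • 1 - T * A * T⁻¹).adjugate (e (.inr 0)) (e (.inr (Fin.last r))) *
          (C * A ^ r * B) 0 0 := by
        rw [mul_nonsing_inv_eq_single_of_row_eq (i := e (.inr 0)) hT (by rw [hTc]; simp),
          mul_eq_single_of_relativeDegree hrd hBz hTz hTc, single_mul_mul_single,
          single_apply_same, one_mul]
    _ = (s • 1 - X).adjugate (.inr 0) (.inr (Fin.last r)) * (C * A ^ r * B) 0 0 := by
        rw [hsub, adjugate_submatrix_equiv_self, submatrix_apply]
    _ = (C * A ^ r * B) 0 0 *
          (s • (1 : Matrix α α R) - Bz * A * T⁻¹.submatrix id (e ∘ .inl)).det := by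
        rw [adjugate_apply, det_updateRow_smul_one_sub_eq_det_toBlocks₁₁ s X
          (conj_submatrix_inr_castSucc hT hTc), conj_submatrix_toBlocks₁₁ hTz, mul_comm]

end ZeroDynamics

end Matrix

/-- There exists `ε ∈ {1, -1}`, independent of `s`, with
`C * adj(s I - A) * B = ε * (C * A^(ρ-1) * B) * det(s I - A_η)` for all `s`. -/
theorem stmt9 {𝕜 : Type*} [Field 𝕜] {n ρ : ℕ} (hρ : 1 ≤ ρ) (hρn : ρ ≤ n)
    (A : Matrix (Fin n) (Fin n) 𝕜) (B : Matrix (Fin n) (Fin 1) 𝕜)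
    (C : Matrix (Fin 1) (Fin n) 𝕜)
    (hrd : ∀ i : ℕ, i + 2 ≤ ρ → C * A ^ i * B = 0)
    (Cbar : Matrix (Fin ρ) (Fin n) 𝕜)
    (hCbar : ∀ (i : Fin ρ) (j : Fin n), Cbar i j = (C * A ^ (i : ℕ)) 0 j)
    (Bz : Matrix (Fin (n - ρ)) (Fin n) 𝕜) (hBz : Bz * B = 0)
    (T : Matrix (Fin n) (Fin n) 𝕜)
    (hT : ∀ (i : Fin n) (j : Fin n),
      T i j = if h : (i : ℕ) < n - ρ then Bz ⟨i, h⟩ j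
              else Cbar ⟨(i : ℕ) - (n - ρ), by omega⟩ j)
    (hTinv : IsUnit T.det)
    (Seta : Matrix (Fin n) (Fin (n - ρ)) 𝕜)
    (hSeta : ∀ (i : Fin n) (k : Fin (n - ρ)), Seta i k = T⁻¹ i ⟨(k : ℕ), by omega⟩)
    (Aeta : Matrix (Fin (n - ρ)) (Fin (n - ρ)) 𝕜)
    (hAeta : Aeta = Bz * A * Seta)
    :
    ∃ ε : 𝕜, (ε = 1 ∨ ε = -1) ∧ ∀ s : 𝕜,
      (C * (s • (1 : Matrix (Fin n) (Fin n) 𝕜) - A).adjugate * B) 0 0 =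
        ε * (C * A ^ (ρ - 1) * B) 0 0 *
          (s • (1 : Matrix (Fin (n - ρ)) (Fin (n - ρ)) 𝕜) - Aeta).det := by
  obtain ⟨r, rfl⟩ : ∃ r, ρ = r + 1 := ⟨ρ - 1, by omega⟩
  let e : Fin (n - (r + 1)) ⊕ Fin (r + 1) ≃ Fin n :=
    finSumFinEquiv.trans (finCongr (Nat.sub_add_cancel hρn))
  have hTz : ∀ i, T (e (.inl i)) = Bz i := fun i => funext fun j => by simp [e, hT]
  have hTc : ∀ k, T (e (.inr k)) = (C * A ^ (k : ℕ)) 0 := fun k => funext fun j => by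
    simp [e, hT, hCbar]
  have hSeta' : Seta = T⁻¹.submatrix id (e ∘ .inl) := by
    ext i k
    exact hSeta i k
  refine ⟨1, Or.inl rfl, fun s => ?_⟩
  rw [one_mul, hAeta, hSeta', Nat.add_sub_cancel]
  exact mul_adjugate_mul_eq_mul_det_zeroDynamics (fun k hk => hrd k (by omega)) hBz hTz hTc
    hTinv s
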